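/- arXiv:2401.17964 — 2 statements merged into one kernel-verified Lean document; each statement's English description precedes it below -/
import Mathlib

section
/- Let X be a finite partially ordered set whose comparability graph G is connected, let T be a spanning tree of G, and let R be a ring. Then every multiplicative automorphism of I(X,R) is inner if and only if the identity is the only multiplicative automorphism ψ of I(X,R) satisfying ψ(e_{xy}) = e_{xy} for every tree edge x < y. -/
/-- A ring automorphism of the incidence algebra is *multiplicative* if it fixes every
function supported on the diagonal and maps functions vanishing on the diagonal to
functions vanishing on the diagonal. -/
def IsMultAut {X R : Type*} [Preorder X] [LocallyFiniteOrder X] [DecidableEq X] [Ring R]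
    (φ : RingAut (IncidenceAlgebra R X)) : Prop :=
  (∀ f : IncidenceAlgebra R X, (∀ x y : X, x ≠ y → f x y = 0) → φ f = f) ∧
  (∀ f : IncidenceAlgebra R X, (∀ x : X, f x x = 0) → ∀ x : X, (φ f) x x = 0)

/-- An automorphism of the incidence algebra is a *fractional automorphism* if it is the
inner automorphism given by a diagonal unit whose diagonal entries are invertible central
elements of `R`. -/
def IsFracAut {X R : Type*} [Preorder X] [LocallyFiniteOrder X] [DecidableEq X] [Ring R]
    (φ : RingAut (IncidenceAlgebra R X)) : Prop :=
  ∃ (v : X → R) (d : (IncidenceAlgebra R X)ˣ),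
    (∀ x : X, v x ∈ Set.center R ∧ IsUnit (v x)) ∧
    (∀ x : X, (d : IncidenceAlgebra R X) x x = v x) ∧
    (∀ x y : X, x ≠ y → (d : IncidenceAlgebra R X) x y = 0) ∧
    (∀ f : IncidenceAlgebra R X, φ f = ↑d⁻¹ * f * ↑d)

/-- The comparability graph of a partially ordered set: `x` and `y` are adjacent iff
they are distinct and comparable. -/
def compGraph (X : Type*) [PartialOrder X] : SimpleGraph X where
  Adj x y := x < y ∨ y < x
  symm := ⟨fun _ _ h => h.symm⟩
  loopless := ⟨fun x h => h.elim (lt_irrefl x) (lt_irrefl x)⟩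

/-- The element `e_{xy}` of the incidence algebra: value `1` at `(x, y)` and `0`
elsewhere. -/
def eSingle {X : Type*} (R : Type*) [Ring R] [PartialOrder X] [DecidableEq X]
    (x y : X) (h : x ≤ y) : IncidenceAlgebra R X :=
  ⟨fun s t => if s = x ∧ t = y then 1 else 0, fun s t hst => by
    try dsimp only
    split_ifs with h'
    · exact absurd ((h'.1.trans_le h).trans_eq h'.2.symm) hst
    · rfl⟩

/-!
A multiplicative automorphism `φ` sends `e_{xy}` to `c_{xy} • e_{xy}`, where `c_{xy}` is a central
unit of `R`, and `φ` is determined by these coefficients. If `φ` is conjugation by a unit `u`, then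
`u_{xx} c_{xy} = u_{yy}`; so if `φ` fixes the tree edges, the diagonal of `u` is constant along the
connected graph `T`, which forces `c_{xy} = 1` for all `x < y`, i.e. `φ = 1`.

Conversely, because `T` is a tree, the coefficients on its edges are the quotients `w_x w_y⁻¹` of a
potential `w` with values in the central units. Undoing conjugation by the diagonal unit `diag w`
turns `φ` into a multiplicative automorphism fixing the tree edges, which is the identity by
hypothesis, so `φ` is inner.
-/

open SimpleGraph

theorem SimpleGraph.Preconnected.apply_eq_of_forall_adj {V β : Type*} {G : SimpleGraph V}
    (hG : G.Preconnected) {f : V → β} (hf : ∀ a b, G.Adj a b → f a = f b) (a b : V) :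
    f a = f b := by
  obtain ⟨p⟩ := hG a b
  induction p with
  | nil => rfl
  | cons h _ ih => exact (hf _ _ h).trans ih

theorem SimpleGraph.IsAcyclic.exists_potential {V M : Type*} [Group M] {G : SimpleGraph V}
    (hacyc : G.IsAcyclic) (hconn : G.Connected) (s : V → V → M)
    (hs : ∀ a b, G.Adj a b → s b a = (s a b)⁻¹) :
    ∃ v : V → M, ∀ a b, G.Adj a b → v b = v a * s a b := by
  classical
  obtain ⟨root⟩ := hconn.nonempty
  choose P hP using fun x => hconn.preconnected.exists_isPath root x
  let weight : ∀ {x}, G.Walk root x → M := fun p => (p.darts.map fun d => s d.fst d.snd).prod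
  have weight_concat : ∀ {x y} (p : G.Walk root x) (h : G.Adj x y),
      weight (p.concat h) = weight p * s x y := by
    intro x y p h
    simp [weight, Walk.darts_concat]
  refine ⟨fun x => weight (P x), fun a b hab => ?_⟩
  show weight (P b) = weight (P a) * s a b
  -- In a tree, the path from the root to one end of an edge is the path to the other end
  -- followed by the edge.
  by_cases ha : a ∈ (P b).support
  · rw [hacyc.path_concat (hP a) (hP b) hab ha, weight_concat]
  · have hb := hacyc.mem_support_of_ne_mem_support_of_adj_of_isPath (hP a) (hP b) hab ha
    rw [hacyc.path_concat (hP b) (hP a) hab.symm hb, weight_concat, hs a b hab,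
      inv_mul_cancel_right]

namespace IncidenceAlgebra

section Semiring

variable {X R : Type*} [PartialOrder X] [LocallyFiniteOrder X] [Semiring R]

theorem mul_apply_self (f g : IncidenceAlgebra R X) (x : X) : (f * g) x x = f x x * g x x := by
  rw [mul_apply, Finset.Icc_self, Finset.sum_singleton]

theorem mul_apply_of_left_diagonal {d : IncidenceAlgebra R X} (hd : ∀ s t, s ≠ t → d s t = 0)
    (f : IncidenceAlgebra R X) (s t : X) : (d * f) s t = d s s * f s t := by
  by_cases hst : s ≤ t
  · exact Finset.sum_eq_single s (fun b _ hb => by rw [hd s b (Ne.symm hb), zero_mul])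
      fun hs => absurd (Finset.mem_Icc.2 ⟨le_rfl, hst⟩) hs
  · rw [apply_eq_zero_of_not_le hst, apply_eq_zero_of_not_le hst, mul_zero]

theorem mul_apply_of_right_diagonal {d : IncidenceAlgebra R X} (hd : ∀ s t, s ≠ t → d s t = 0)
    (f : IncidenceAlgebra R X) (s t : X) : (f * d) s t = f s t * d t t := by
  by_cases hst : s ≤ t
  · exact Finset.sum_eq_single t (fun b _ hb => by rw [hd b t hb, mul_zero])
      fun ht => absurd (Finset.mem_Icc.2 ⟨hst, le_rfl⟩) ht
  · rw [apply_eq_zero_of_not_le hst, apply_eq_zero_of_not_le hst, zero_mul]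

variable [DecidableEq X]

theorem isUnit_apply_self (u : (IncidenceAlgebra R X)ˣ) (x : X) :
    IsUnit ((u : IncidenceAlgebra R X) x x) :=
  ⟨⟨_, (↑u⁻¹ : IncidenceAlgebra R X) x x,
    by rw [← mul_apply_self, u.mul_inv, one_apply, if_pos rfl],
    by rw [← mul_apply_self, u.inv_mul, one_apply, if_pos rfl]⟩, rfl⟩

def diag : (X → R) →+* IncidenceAlgebra R X where
  toFun v := ⟨fun s t => if s = t then v s else 0,
    fun s t hst => if_neg (by rintro rfl; exact hst le_rfl)⟩
  map_one' := rfl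
  map_zero' := by ext s t; simp
  map_add' v w := by ext s t; simp only [coe_mk, add_apply]; split_ifs <;> simp
  map_mul' v w := by
    ext s t
    rw [mul_apply_of_left_diagonal fun s t hst => if_neg hst]
    simp only [coe_mk]
    split_ifs <;> simp_all

theorem diag_apply (v : X → R) (s t : X) : diag v s t = if s = t then v s else 0 := rfl

theorem diag_mul_apply (v : X → R) (f : IncidenceAlgebra R X) (s t : X) :
    (diag v * f) s t = v s * f s t := by
  rw [mul_apply_of_left_diagonal fun s t hst => if_neg hst, diag_apply, if_pos rfl]

theorem mul_diag_apply (v : X → R) (f : IncidenceAlgebra R X) (s t : X) :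
    (f * diag v) s t = f s t * v t := by
  rw [mul_apply_of_right_diagonal fun s t hst => if_neg hst, diag_apply, if_pos rfl]

theorem smul_eq_diag_mul (r : R) (f : IncidenceAlgebra R X) : r • f = diag (fun _ => r) * f := by
  ext s t
  rw [diag_mul_apply]
  rfl

def diagUnits : (X → Rˣ) →* (IncidenceAlgebra R X)ˣ :=
  (Units.map (diag : (X → R) →+* IncidenceAlgebra R X).toMonoidHom).comp
    MulEquiv.piUnits.symm.toMonoidHom

theorem coe_diagUnits (w : X → Rˣ) :
    (diagUnits w : IncidenceAlgebra R X) = diag fun x => (w x : R) := rfl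

end Semiring

end IncidenceAlgebra

open IncidenceAlgebra

section eSingle

variable {X R : Type*} [PartialOrder X] [DecidableEq X] [Ring R]

theorem eSingle_apply {x y : X} (h : x ≤ y) (s t : X) :
    eSingle R x y h s t = if s = x ∧ t = y then 1 else 0 := rfl

theorem eSingle_apply_self {x y : X} (h : x ≤ y) : eSingle R x y h x y = 1 := if_pos ⟨rfl, rfl⟩

theorem eSingle_self_apply_of_ne (x : X) {s t : X} (hst : s ≠ t) :
    eSingle R x x le_rfl s t = 0 :=
  if_neg fun h => hst (h.1.trans h.2.symm)

variable [LocallyFiniteOrder X]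

theorem eSingle_mul_apply {x y : X} (h : x ≤ y) (g : IncidenceAlgebra R X) (s t : X) :
    (eSingle R x y h * g) s t = if s = x then g y t else 0 := by
  rw [mul_apply]
  split_ifs with hs
  · subst hs
    by_cases hyt : y ≤ t
    · rw [Finset.sum_eq_single y (fun b _ hb => by simp [eSingle_apply, hb])
        (fun hy => absurd (Finset.mem_Icc.2 ⟨h, hyt⟩) hy), eSingle_apply_self, one_mul]
    · simp [eSingle_apply, apply_eq_zero_of_not_le hyt]
  · exact Finset.sum_eq_zero fun b _ => by simp [eSingle_apply, hs]

theorem mul_eSingle_apply {x y : X} (h : x ≤ y) (g : IncidenceAlgebra R X) (s t : X) :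
    (g * eSingle R x y h) s t = if t = y then g s x else 0 := by
  rw [mul_apply]
  split_ifs with ht
  · subst ht
    by_cases hsx : s ≤ x
    · rw [Finset.sum_eq_single x (fun b _ hb => by simp [eSingle_apply, hb])
        (fun hx => absurd (Finset.mem_Icc.2 ⟨hsx, h⟩) hx), eSingle_apply_self, mul_one]
    · simp [eSingle_apply, apply_eq_zero_of_not_le hsx]
  · exact Finset.sum_eq_zero fun b _ => by simp [eSingle_apply, ht]

theorem eSingle_mul_mul_eSingle (f : IncidenceAlgebra R X) {s t : X} (h : s ≤ t) :
    eSingle R s s le_rfl * f * eSingle R t t le_rfl = f s t • eSingle R s t h := by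
  ext a b
  rw [mul_eSingle_apply, eSingle_mul_apply, constSMul_apply, eSingle_apply, smul_eq_mul]
  by_cases hb : b = t <;> by_cases ha : a = s <;> simp [ha, hb]

theorem eSingle_mul_diag {x y : X} (h : x ≤ y) (v : X → R) :
    eSingle R x y h * diag v = v y • eSingle R x y h := by
  ext s t
  rw [mul_diag_apply, constSMul_apply, eSingle_apply, smul_eq_mul]
  split_ifs with hst
  · rw [hst.2, one_mul, mul_one]
  · rw [zero_mul, mul_zero]

end eSingle

section Fractional

variable {X R : Type*} [PartialOrder X] [LocallyFiniteOrder X] [DecidableEq X] [Ring R]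

theorem IsFracAut.isMultAut {φ : RingAut (IncidenceAlgebra R X)} (hφ : IsFracAut φ) :
    IsMultAut φ := by
  obtain ⟨v, d, hv, hdiag, hoff, hφd⟩ := hφ
  refine ⟨fun f hf => ?_, fun f hf x => ?_⟩
  · have hcomm : f * d = d * f := IncidenceAlgebra.ext fun s t _ => by
      rw [mul_apply_of_right_diagonal hoff, mul_apply_of_left_diagonal hoff]
      by_cases hst : s = t
      · subst hst
        rw [hdiag]
        exact ((hv s).1.comm (f s s)).symm
      · rw [hf s t hst, zero_mul, mul_zero]
    rw [hφd, mul_assoc, hcomm, ← mul_assoc, Units.inv_mul, one_mul]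
  · rw [hφd, mul_apply_self, mul_apply_self, hf x, mul_zero, zero_mul]

theorem isFracAut_toRingAut_diagUnits (w : X → Rˣ) (hw : ∀ x, (w x : R) ∈ Set.center R) :
    IsFracAut (MulSemiringAction.toRingAut (ConjAct (IncidenceAlgebra R X)ˣ) (IncidenceAlgebra R X)
      (ConjAct.toConjAct (diagUnits w))) :=
  ⟨fun x => ↑(w x)⁻¹, (diagUnits w)⁻¹, fun x => ⟨Set.units_inv_mem_center (hw x), Units.isUnit _⟩,
    fun _ => if_pos rfl, fun _ _ hxy => if_neg hxy, fun f => by simp [ConjAct.units_smul_def]⟩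

end Fractional

theorem isMultAut_one {X R : Type*} [PartialOrder X] [LocallyFiniteOrder X] [DecidableEq X]
    [Ring R] : IsMultAut (1 : RingAut (IncidenceAlgebra R X)) :=
  ⟨fun _ _ => rfl, fun _ hf => hf⟩

namespace IsMultAut

variable {X R : Type*} [PartialOrder X] [LocallyFiniteOrder X] [DecidableEq X] [Ring R]
  {φ ψ : RingAut (IncidenceAlgebra R X)}

theorem trans (hφ : IsMultAut φ) (hψ : IsMultAut ψ) : IsMultAut (φ.trans ψ) :=
  ⟨fun f hf => by rw [RingEquiv.trans_apply, hφ.1 f hf, hψ.1 f hf],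
    fun f hf => hψ.2 _ (hφ.2 f hf)⟩

theorem map_diag (hφ : IsMultAut φ) (v : X → R) : φ (diag v) = diag v :=
  hφ.1 _ fun _ _ hst => if_neg hst

theorem map_smul (hφ : IsMultAut φ) (r : R) (f : IncidenceAlgebra R X) : φ (r • f) = r • φ f := by
  rw [smul_eq_diag_mul, map_mul, hφ.map_diag, smul_eq_diag_mul]

/-- Writing `f = φ g`, the off-diagonal part of `g` is sent by `φ` to a function vanishing on the
diagonal, so `f` and `g` have the same diagonal. -/
theorem symm (hφ : IsMultAut φ) : IsMultAut φ.symm := by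
  refine ⟨fun f hf => φ.symm_apply_eq.2 (hφ.1 f hf).symm, fun f hf x => ?_⟩
  obtain ⟨g, rfl⟩ := φ.surjective f
  have hoff : ∀ z, (g - diag (fun z => g z z)) z z = 0 := fun z => by
    rw [IncidenceAlgebra.sub_apply, diag_apply, if_pos rfl, sub_self]
  have hsplit : φ g = diag (fun z => g z z) + φ (g - diag (fun z => g z z)) := by
    rw [map_sub, hφ.map_diag, add_sub_cancel]
  rw [RingEquiv.symm_apply_apply, ← hf x, hsplit, IncidenceAlgebra.add_apply, diag_apply,
    if_pos rfl, hφ.2 _ hoff x, add_zero]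

theorem map_eSingle_self (hφ : IsMultAut φ) (x : X) :
    φ (eSingle R x x le_rfl) = eSingle R x x le_rfl :=
  hφ.1 _ fun _ _ => eSingle_self_apply_of_ne x

theorem map_eSingle (hφ : IsMultAut φ) {x y : X} (h : x ≤ y) :
    φ (eSingle R x y h) = φ (eSingle R x y h) x y • eSingle R x y h :=
  calc φ (eSingle R x y h)
      = φ (eSingle R x x le_rfl * eSingle R x y h * eSingle R y y le_rfl) := by
        rw [eSingle_mul_mul_eSingle _ h, eSingle_apply_self, one_smul]
    _ = eSingle R x x le_rfl * φ (eSingle R x y h) * eSingle R y y le_rfl := by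
        rw [map_mul, map_mul, hφ.map_eSingle_self, hφ.map_eSingle_self]
    _ = _ := eSingle_mul_mul_eSingle _ h

theorem map_eSingle_eq_self_iff (hφ : IsMultAut φ) {x y : X} (h : x ≤ y) :
    φ (eSingle R x y h) = eSingle R x y h ↔ φ (eSingle R x y h) x y = 1 := by
  refine ⟨fun he => by rw [he, eSingle_apply_self], fun he => ?_⟩
  rw [hφ.map_eSingle, he, one_smul]

theorem apply_eSingle_mem_center (hφ : IsMultAut φ) {x y : X} (h : x ≤ y) :
    φ (eSingle R x y h) x y ∈ Subring.center R := by
  refine Subring.mem_center_iff.2 fun r => ?_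
  have := congrArg (fun f : IncidenceAlgebra R X => f x y)
    (congrArg φ (eSingle_mul_diag h fun _ => r))
  simp only [map_mul, hφ.map_diag, mul_diag_apply, hφ.map_smul, constSMul_apply,
    smul_eq_mul] at this
  exact this.symm

theorem symm_apply_eSingle_mul_apply_eSingle (hφ : IsMultAut φ) {x y : X} (h : x ≤ y) :
    φ.symm (eSingle R x y h) x y * φ (eSingle R x y h) x y = 1 := by
  have := congrArg (fun f : IncidenceAlgebra R X => f x y)
    (φ.apply_symm_apply (eSingle R x y h))
  rw [hφ.symm.map_eSingle, hφ.map_smul, hφ.map_eSingle] at this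
  simpa [constSMul_apply, eSingle_apply_self] using this

theorem exists_unit_center_coe_eq (hφ : IsMultAut φ) {x y : X} (h : x ≤ y) :
    ∃ c : (Subring.center R)ˣ, ((c : Subring.center R) : R) = φ (eSingle R x y h) x y :=
  ⟨⟨⟨_, hφ.apply_eSingle_mem_center h⟩, ⟨_, hφ.symm.apply_eSingle_mem_center h⟩,
    Subtype.ext (hφ.symm.symm_apply_eSingle_mul_apply_eSingle h),
    Subtype.ext (hφ.symm_apply_eSingle_mul_apply_eSingle h)⟩, rfl⟩

/-- Sandwiching `f` between `e_{ss}` and `e_{tt}` isolates its entry `f s t`. -/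
theorem eq_one_of_map_eSingle (hψ : IsMultAut ψ)
    (hfix : ∀ (x y : X) (h : x < y), ψ (eSingle R x y h.le) = eSingle R x y h.le) : ψ = 1 := by
  refine RingEquiv.ext fun f => IncidenceAlgebra.ext fun s t hst => ?_
  have hst_fix : ψ (eSingle R s t hst) = eSingle R s t hst := by
    rcases hst.lt_or_eq with hlt | rfl
    · exact hfix s t hlt
    · exact hψ.map_eSingle_self s
  have := congrArg (fun g : IncidenceAlgebra R X => g s t)
    (congrArg ψ (eSingle_mul_mul_eSingle f hst))
  simp only [map_mul, hψ.map_eSingle_self, hψ.map_smul, hst_fix, mul_eSingle_apply,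
    eSingle_mul_apply, constSMul_apply, eSingle_apply_self, if_pos, smul_eq_mul, mul_one] at this
  exact this

theorem apply_self_mul_apply_eSingle_of_conj (hψ : IsMultAut ψ) (hφ : IsMultAut φ)
    (u : (IncidenceAlgebra R X)ˣ) (hu : ∀ f, ψ f = ↑u⁻¹ * φ f * ↑u) {x y : X} (h : x ≤ y) :
    (u : IncidenceAlgebra R X) x x * ψ (eSingle R x y h) x y =
      φ (eSingle R x y h) x y * (u : IncidenceAlgebra R X) y y := by
  have hcomm : (u : IncidenceAlgebra R X) * ψ (eSingle R x y h) = φ (eSingle R x y h) * u := by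
    rw [hu, ← mul_assoc, ← mul_assoc, Units.mul_inv, one_mul]
  have := congrArg (fun g : IncidenceAlgebra R X => g x y) hcomm
  rw [hψ.map_eSingle, hφ.map_eSingle, smul_eq_diag_mul, smul_eq_diag_mul,
    ← mul_assoc (u : IncidenceAlgebra R X), mul_assoc (diag _)] at this
  simpa only [mul_eSingle_apply, mul_diag_apply, diag_mul_apply, eSingle_mul_apply, if_pos]
    using this

variable {T : SimpleGraph X}

theorem eq_one_of_conj_of_map_eSingle_adj (hψ : IsMultAut ψ) (hT : T ≤ compGraph X)
    (hconn : T.Preconnected) (u : (IncidenceAlgebra R X)ˣ) (hu : ∀ f, ψ f = ↑u⁻¹ * f * ↑u)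
    (hfix : ∀ (x y : X) (h : x < y), T.Adj x y → ψ (eSingle R x y h.le) = eSingle R x y h.le) :
    ψ = 1 := by
  have key : ∀ x y (h : x < y), (u : IncidenceAlgebra R X) x x * ψ (eSingle R x y h.le) x y =
      (u : IncidenceAlgebra R X) y y := fun x y h => by
    simpa [eSingle_apply_self] using hψ.apply_self_mul_apply_eSingle_of_conj isMultAut_one u hu h.le
  have hconst := hconn.apply_eq_of_forall_adj (f := fun x => (u : IncidenceAlgebra R X) x x)
    fun a b hab => by
      rcases hT hab with h | h
      · simpa [(hψ.map_eSingle_eq_self_iff h.le).1 (hfix a b h hab)] using key a b h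
      · simpa [(hψ.map_eSingle_eq_self_iff h.le).1 (hfix b a h hab.symm)] using (key b a h).symm
  refine hψ.eq_one_of_map_eSingle fun x y h => (hψ.map_eSingle_eq_self_iff h.le).2 ?_
  exact (isUnit_apply_self u x).mul_left_cancel ((key x y h).trans (by rw [hconst y x, mul_one]))

theorem exists_center_potential (hφ : IsMultAut φ) (hT : T ≤ compGraph X) (hconn : T.Connected)
    (hacyc : T.IsAcyclic) :
    ∃ w : X → (Subring.center R)ˣ, ∀ x y (h : x < y), T.Adj x y →
      ((w x : Subring.center R) : R) = φ (eSingle R x y h.le) x y * (w y : Subring.center R) := by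
  classical
  choose c hc using fun x y (h : x < y) => hφ.exists_unit_center_coe_eq h.le
  obtain ⟨w, hw⟩ := hacyc.exists_potential hconn
    (fun a b => if h : a < b then (c a b h)⁻¹ else if h' : b < a then c b a h' else 1)
    fun a b hab => by rcases hT hab with h | h <;> simp [h, h.not_gt]
  refine ⟨w, fun x y h hxy => ?_⟩
  have hwy := hw x y hxy
  rw [dif_pos h] at hwy
  rw [← hc x y h, hwy, ← Subring.coe_mul, ← Units.val_mul, mul_mul_inv_cancel'_right]

theorem exists_eq_trans_isFracAut (hφ : IsMultAut φ) (hT : T ≤ compGraph X)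
    (hconn : T.Connected) (hacyc : T.IsAcyclic) :
    ∃ ψ ι : RingAut (IncidenceAlgebra R X), IsMultAut ψ ∧
      (∀ (x y : X) (h : x < y), T.Adj x y → ψ (eSingle R x y h.le) = eSingle R x y h.le) ∧
      IsFracAut ι ∧ φ = ψ.trans ι := by
  obtain ⟨w, hw⟩ := hφ.exists_center_potential hT hconn hacyc
  let D := diagUnits fun x => Units.map (Subring.center R).subtype.toMonoidHom (w x)
  let ι := MulSemiringAction.toRingAut (ConjAct (IncidenceAlgebra R X)ˣ) (IncidenceAlgebra R X)
    (ConjAct.toConjAct D)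
  have hι : IsFracAut ι :=
    isFracAut_toRingAut_diagUnits _ fun x => Subring.coe_center R ▸ (w x : Subring.center R).2
  have hψ : IsMultAut (φ.trans ι.symm) := hφ.trans hι.isMultAut.symm
  refine ⟨φ.trans ι.symm, ι, hψ, fun x y h hxy => ?_, hι, by ext f; simp⟩
  have key := hψ.apply_self_mul_apply_eSingle_of_conj hφ D
    (fun f => by simp [ι, ConjAct.units_smul_def]) h.le
  simp only [D, coe_diagUnits, diag_apply, if_pos, Units.coe_map, RingHom.toMonoidHom_eq_coe,
    MonoidHom.coe_coe, Subring.subtype_apply] at key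
  rw [← hw x y h hxy] at key
  rw [hψ.map_eSingle_eq_self_iff]
  exact ((w x).isUnit.map (Subring.center R).subtype).mul_left_cancel
    (key.trans (mul_one _).symm)

end IsMultAut

theorem all_mult_aut_inner_iff_general {X R : Type*} [PartialOrder X]
    [LocallyFiniteOrder X] [DecidableEq X] [Ring R]
    (T : SimpleGraph X) (hT : T ≤ compGraph X) (hTconn : T.Connected)
    (hTacyc : T.IsAcyclic) :
    (∀ φ : RingAut (IncidenceAlgebra R X), IsMultAut φ →
      ∃ u : (IncidenceAlgebra R X)ˣ, ∀ f : IncidenceAlgebra R X, φ f = ↑u⁻¹ * f * ↑u) ↔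
    (∀ ψ : RingAut (IncidenceAlgebra R X), IsMultAut ψ →
      (∀ (x y : X) (h : x < y), T.Adj x y →
        ψ (eSingle R x y h.le) = eSingle R x y h.le) → ψ = 1) := by
  constructor
  · intro hinner ψ hψ hfix
    obtain ⟨u, hu⟩ := hinner ψ hψ
    exact hψ.eq_one_of_conj_of_map_eSingle_adj hT hTconn.preconnected u hu hfix
  · intro honly φ hφ
    obtain ⟨ψ, ι, hψ, hfix, ⟨-, d, -, -, -, hι⟩, rfl⟩ :=
      hφ.exists_eq_trans_isFracAut hT hTconn hTacyc
    rw [honly ψ hψ hfix]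
    exact ⟨d, hι⟩

/-- For a finite poset with connected comparability graph and spanning
tree `T`, every multiplicative automorphism of the incidence algebra is inner iff the
identity is the only multiplicative automorphism fixing all `e_{xy}` for tree edges
`x < y` (Corollary 3.8). -/
theorem all_mult_aut_inner_iff {X R : Type*} [PartialOrder X] [Fintype X]
    [LocallyFiniteOrder X] [DecidableEq X] [Ring R]
    (hG : (compGraph X).Connected)
    (T : SimpleGraph X) (hT : T ≤ compGraph X) (hTconn : T.Connected)
    (hTacyc : T.IsAcyclic) :
    (∀ φ : RingAut (IncidenceAlgebra R X), IsMultAut φ →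
      ∃ u : (IncidenceAlgebra R X)ˣ, ∀ f : IncidenceAlgebra R X, φ f = ↑u⁻¹ * f * ↑u) ↔
    (∀ ψ : RingAut (IncidenceAlgebra R X), IsMultAut ψ →
      (∀ (x y : X) (h : x < y), T.Adj x y →
        ψ (eSingle R x y h.le) = eSingle R x y h.le) → ψ = 1) :=
  all_mult_aut_inner_iff_general T hT hTconn hTacyc
end

section
/- Let X be a finite partially ordered set whose comparability graph G is connected, let R be a ring, and let φ be a multiplicative automorphism of I(X,R) associated with a coherent system c. Then φ is inner if and only if for all x, y ∈ X, any two walks in G from x to y have equal weight. -/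
open scoped Classical in
/-- The weight of a walk with respect to a system `c`: the product over the darts
`(s, t)` of the walk, in order, of `c s t` if `s < t` and of `(c t s)⁻¹` if `t < s`. -/
noncomputable def walkWeight {X R : Type*} [PartialOrder X] [Ring R]
    (c : X → X → R) {H : SimpleGraph X} {x y : X} (p : H.Walk x y) : R :=
  (p.darts.map fun d => if d.toProd.1 < d.toProd.2 then c d.toProd.1 d.toProd.2
    else Ring.inverse (c d.toProd.2 d.toProd.1)).prod

/-! If `φ` is conjugation by a unit `u`, comparing the `(x, y)` entries of `u * φ e = e * u` for
the matrix unit `e` at `x < y` gives `u x x * c x y = u y y`; so every edge weight is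
`(u s s)⁻¹ * u t t` and walk weights telescope. Conversely, if walk weights depend only on the
endpoints, the weights `σ x` of walks from a fixed base point are central units with
`σ x * c x y = σ y`, and conjugation by the diagonal unit with entries `σ x` is `φ`. -/

open SimpleGraph

namespace IncidenceAlgebra

variable {R X : Type*} [Ring R] [PartialOrder X] [DecidableEq X]

def diagonal (a : X → R) : IncidenceAlgebra R X :=
  ⟨fun x y => if x = y then a x else 0, fun _ _ h => if_neg fun hxy => h hxy.le⟩

lemma diagonal_apply (a : X → R) (x y : X) : diagonal a x y = if x = y then a x else 0 := rfl

lemma diagonal_one : diagonal (1 : X → R) = 1 := by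
  ext x y -
  simp [one_apply, diagonal_apply]

def single {x y : X} (h : x ≤ y) (r : R) : IncidenceAlgebra R X :=
  ⟨fun s t => if s = x ∧ t = y then r else 0,
    fun _ _ hst => if_neg fun ⟨hs, ht⟩ => hst (hs ▸ ht ▸ h)⟩

lemma single_apply {x y : X} (h : x ≤ y) (r : R) (s t : X) :
    single h r s t = if s = x ∧ t = y then r else 0 := rfl

variable [LocallyFiniteOrder X]

lemma diagonal_mul_mul_diagonal_apply (a b : X → R) (f : IncidenceAlgebra R X) (x y : X) :
    (diagonal a * f * diagonal b) x y = a x * f x y * b y := by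
  by_cases hxy : x ≤ y
  · simp [mul_apply, diagonal_apply, hxy]
  · simp [apply_eq_zero_of_not_le hxy]

lemma diagonal_mul_diagonal (a b : X → R) : diagonal a * diagonal b = diagonal (a * b) := by
  ext x y hxy
  obtain rfl | hne := eq_or_ne x y <;> simp [mul_apply, diagonal_apply, *]

def diagonalUnit (σ : X → Rˣ) : (IncidenceAlgebra R X)ˣ where
  val := diagonal fun x => σ x
  inv := diagonal fun x => ↑(σ x)⁻¹
  val_inv := by rw [diagonal_mul_diagonal, ← diagonal_one]; congr; ext; simp
  inv_val := by rw [diagonal_mul_diagonal, ← diagonal_one]; congr; ext; simp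

lemma diagonalUnit_inv_mul_mul_apply (σ : X → Rˣ) (f : IncidenceAlgebra R X) (x y : X) :
    (↑(diagonalUnit σ)⁻¹ * f * ↑(diagonalUnit σ)) x y = ↑(σ x)⁻¹ * f x y * σ y :=
  diagonal_mul_mul_diagonal_apply _ _ f x y

def diagEntryHom (x : X) : IncidenceAlgebra R X →* R where
  toFun f := f x x
  map_one' := by simp [one_apply]
  map_mul' f g := by simp [mul_apply]

lemma mul_single_apply (f : IncidenceAlgebra R X) {x y : X} (h : x ≤ y) (r : R) :
    (f * single h r) x y = f x x * r := by
  simp [mul_apply, single_apply, h]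

lemma single_mul_apply (f : IncidenceAlgebra R X) {x y : X} (h : x ≤ y) (r : R) :
    (single h r * f) x y = r * f y y := by
  simp [mul_apply, single_apply, h]

def IsAssociatedWith (φ : RingAut (IncidenceAlgebra R X)) (c : X → X → R) : Prop :=
  ∀ f : IncidenceAlgebra R X, (∀ x y, x < y → φ f x y = c x y * f x y) ∧ ∀ x, φ f x x = f x x

namespace IsAssociatedWith

variable {φ : RingAut (IncidenceAlgebra R X)} {c : X → X → R}

lemma map_single (hφ : IsAssociatedWith φ c) {x y : X} (hxy : x < y) (r : R) :
    φ (single hxy.le r) = single hxy.le (c x y * r) := by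
  ext s t hst
  rcases hst.eq_or_lt with rfl | hst
  · have hne : ¬(s = x ∧ s = y) := fun h => hxy.ne (h.1.symm.trans h.2)
    rw [(hφ _).2, single_apply, single_apply, if_neg hne, if_neg hne]
  · rw [(hφ _).1 s t hst]
    simp only [single_apply]
    split_ifs with h
    · obtain ⟨rfl, rfl⟩ := h
      rfl
    · exact mul_zero _

lemma apply_self_mul_eq_of_inner (hφ : IsAssociatedWith φ c) {u : (IncidenceAlgebra R X)ˣ}
    (hu : ∀ f, φ f = ↑u⁻¹ * f * ↑u) {x y : X} (hxy : x < y) :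
    (u : IncidenceAlgebra R X) x x * c x y = (u : IncidenceAlgebra R X) y y := by
  have h : (u : IncidenceAlgebra R X) * φ (single hxy.le (1 : R)) =
      single hxy.le 1 * (u : IncidenceAlgebra R X) := by
    rw [hu, ← mul_assoc, ← mul_assoc, Units.mul_inv, one_mul]
  have := congr($h x y)
  rwa [hφ.map_single hxy, mul_single_apply, single_mul_apply, mul_one, one_mul] at this

lemma eq_diagonalUnit_inv_mul_mul (hφ : IsAssociatedWith φ c) (σ : X → Rˣ)
    (hσc : ∀ x, (σ x : R) ∈ Set.center R) (hσ : ∀ x y, x < y → ↑(σ x) * c x y = σ y)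
    (f : IncidenceAlgebra R X) : φ f = ↑(diagonalUnit σ)⁻¹ * f * ↑(diagonalUnit σ) := by
  ext x y hxy
  rw [diagonalUnit_inv_mul_mul_apply, mul_assoc, Semigroup.mem_center_iff.1 (hσc y)]
  rcases hxy.eq_or_lt with rfl | hxy
  · rw [(hφ f).2, Units.inv_mul_cancel_left]
  · rw [(hφ f).1 x y hxy, ← mul_assoc, (Units.eq_inv_mul_iff_mul_eq _).2 (hσ x y hxy)]

end IsAssociatedWith

end IncidenceAlgebra

section WalkWeight

variable {X R : Type*} [PartialOrder X] [Ring R] (c : X → X → R)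

open scoped Classical in
noncomputable def edgeWeight (s t : X) : R :=
  if s < t then c s t else Ring.inverse (c t s)

variable {c} {H : SimpleGraph X}

lemma edgeWeight_of_lt {s t : X} (h : s < t) : edgeWeight c s t = c s t := if_pos h

lemma edgeWeight_of_gt {s t : X} (h : t < s) : edgeWeight c s t = Ring.inverse (c t s) :=
  if_neg h.asymm

lemma walkWeight_eq_prod_edgeWeight {x y : X} (p : H.Walk x y) :
    walkWeight c p = (p.darts.map fun d => edgeWeight c d.fst d.snd).prod := rfl

@[simp]
lemma walkWeight_nil {x : X} : walkWeight c (Walk.nil : H.Walk x x) = 1 := rfl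

lemma walkWeight_cons {x y z : X} (h : H.Adj x y) (p : H.Walk y z) :
    walkWeight c (.cons h p) = edgeWeight c x y * walkWeight c p := by
  simp [walkWeight_eq_prod_edgeWeight]

lemma walkWeight_append {x y z : X} (p : H.Walk x y) (q : H.Walk y z) :
    walkWeight c (p.append q) = walkWeight c p * walkWeight c q := by
  simp [walkWeight_eq_prod_edgeWeight, Walk.darts_append]

lemma walkWeight_mem {S : Submonoid R} (hS : ∀ s t, H.Adj s t → edgeWeight c s t ∈ S)
    {x y : X} (p : H.Walk x y) : walkWeight c p ∈ S :=
  S.list_prod_mem fun _ hr => by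
    obtain ⟨d, -, rfl⟩ := List.mem_map.1 hr
    exact hS _ _ d.adj

lemma walkWeight_eq_inv_mul_of_edgeWeight (a : X → Rˣ)
    (ha : ∀ s t, H.Adj s t → edgeWeight c s t = ↑(a s)⁻¹ * a t) {x y : X} (p : H.Walk x y) :
    walkWeight c p = ↑(a x)⁻¹ * a y := by
  induction p with
  | nil => simp
  | cons h p ih => rw [walkWeight_cons, ha _ _ h, ih, mul_assoc, Units.mul_inv_cancel_left]

lemma SimpleGraph.Connected.exists_mul_edgeWeight_eq (hH : H.Connected) {S : Submonoid R}
    (hS : ∀ s t, H.Adj s t → edgeWeight c s t ∈ S)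
    (hW : ∀ (x y : X) (p q : H.Walk x y), walkWeight c p = walkWeight c q) :
    ∃ σ : X → R, (∀ x, σ x ∈ S) ∧ ∀ s t, H.Adj s t → σ s * edgeWeight c s t = σ t := by
  obtain ⟨x₀⟩ := hH.nonempty
  let path (x : X) : H.Walk x₀ x := (hH.preconnected x₀ x).some
  refine ⟨fun x => walkWeight c (path x), fun x => walkWeight_mem hS _, fun s t h => ?_⟩
  simpa [walkWeight_append, walkWeight_cons] using hW x₀ t ((path s).append (.cons h .nil)) (path t)

lemma edgeWeight_eq_inv_mul_of_mul_eq (a : X → Rˣ) (ha : ∀ x y, x < y → ↑(a x) * c x y = a y)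
    {s t : X} (hst : (compGraph X).Adj s t) : edgeWeight c s t = ↑(a s)⁻¹ * a t := by
  rcases hst with hst | hts
  · rw [edgeWeight_of_lt hst, Units.eq_inv_mul_iff_mul_eq, ha s t hst]
  · rw [edgeWeight_of_gt hts, (Units.eq_inv_mul_iff_mul_eq _).2 (ha t s hts), ← Units.val_mul,
      Ring.inverse_unit, mul_inv_rev, inv_inv, Units.val_mul]

lemma edgeWeight_mem_center_inf_isUnit
    (hc : ∀ x y : X, x < y → c x y ∈ Set.center R ∧ IsUnit (c x y))
    (s t : X) (hst : (compGraph X).Adj s t) :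
    edgeWeight c s t ∈ Submonoid.center R ⊓ IsUnit.submonoid R := by
  rcases hst with hst | hts
  · rw [edgeWeight_of_lt hst]
    exact hc s t hst
  · obtain ⟨hcen, u, hu⟩ := hc t s hts
    rw [edgeWeight_of_gt hts, ← hu, Ring.inverse_unit]
    exact ⟨Set.units_inv_mem_center (hu ▸ hcen), u⁻¹.isUnit⟩

end WalkWeight

theorem inner_iff_walk_weights_equal_general {X R : Type*} [PartialOrder X]
    [LocallyFiniteOrder X] [DecidableEq X] [Ring R]
    (hG : (compGraph X).Connected)
    (φ : RingAut (IncidenceAlgebra R X))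
    (c : X → X → R)
    (hc : ∀ x y : X, x < y → c x y ∈ Set.center R ∧ IsUnit (c x y))
    (hassoc : ∀ f : IncidenceAlgebra R X,
      (∀ x y : X, x < y → (φ f) x y = c x y * f x y) ∧ (∀ x : X, (φ f) x x = f x x)) :
    (∃ u : (IncidenceAlgebra R X)ˣ, ∀ f : IncidenceAlgebra R X, φ f = ↑u⁻¹ * f * ↑u) ↔
    (∀ (x y : X) (p q : (compGraph X).Walk x y), walkWeight c p = walkWeight c q) := by
  have hφ : IncidenceAlgebra.IsAssociatedWith φ c := hassoc
  constructor
  · rintro ⟨u, hu⟩ x y p q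
    let a (s : X) : Rˣ := Units.map (IncidenceAlgebra.diagEntryHom s) u
    have ha (s t : X) (hst : (compGraph X).Adj s t) : edgeWeight c s t = ↑(a s)⁻¹ * a t :=
      edgeWeight_eq_inv_mul_of_mul_eq a (fun _ _ hxy => hφ.apply_self_mul_eq_of_inner hu hxy) hst
    rw [walkWeight_eq_inv_mul_of_edgeWeight a ha p, walkWeight_eq_inv_mul_of_edgeWeight a ha q]
  · intro hW
    obtain ⟨σ, hσS, hσ⟩ := hG.exists_mul_edgeWeight_eq (edgeWeight_mem_center_inf_isUnit hc) hW
    choose τ hτ using fun x => ((hσS x).2 : IsUnit (σ x))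
    refine ⟨IncidenceAlgebra.diagonalUnit τ,
      hφ.eq_diagonalUnit_inv_mul_mul τ (fun x => hτ x ▸ (hσS x).1) fun x y hxy => ?_⟩
    simpa [hτ, edgeWeight_of_lt hxy] using hσ x y (Or.inl hxy)

/-- A multiplicative automorphism associated with a coherent system `c`
is inner iff any two walks of the comparability graph with the same endpoints have equal
weight (Corollary 3.9). -/
theorem inner_iff_walk_weights_equal {X R : Type*} [PartialOrder X] [Fintype X]
    [LocallyFiniteOrder X] [DecidableEq X] [Ring R]
    (hG : (compGraph X).Connected)
    (φ : RingAut (IncidenceAlgebra R X)) (hφ : IsMultAut φ)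
    (c : X → X → R)
    (hc : ∀ x y : X, x < y → c x y ∈ Set.center R ∧ IsUnit (c x y))
    (hcoh : ∀ x z y : X, x < z → z < y → c x y = c x z * c z y)
    (hassoc : ∀ f : IncidenceAlgebra R X,
      (∀ x y : X, x < y → (φ f) x y = c x y * f x y) ∧ (∀ x : X, (φ f) x x = f x x)) :
    (∃ u : (IncidenceAlgebra R X)ˣ, ∀ f : IncidenceAlgebra R X, φ f = ↑u⁻¹ * f * ↑u) ↔
    (∀ (x y : X) (p q : (compGraph X).Walk x y), walkWeight c p = walkWeight c q) :=
  inner_iff_walk_weights_equal_general hG φ c hc hassoc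
end
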